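/- arXiv:1305.2487 — 3 statements merged into one kernel-verified Lean document; each statement's English description precedes it below -/
import Mathlib

section
/- Let σ = {λ₀} for some nonzero real λ₀, and let η_{λ₀} ∈ ℝ ∪ {∞} with η_{λ₀} not negative (i.e., η_{λ₀} ≥ 0 or η_{λ₀} = ∞). Then the pair of polynomials Φ₋(z) = 1 − z·(1 − min(1, η_{λ₀}^{−1}))/λ₀ and Φ₊(z) = 1 − z·(1 − min(1, η_{λ₀}))/λ₀ (where, for η_{λ₀} = ∞, one reads min(1, η_{λ₀}^{−1}) = 0 and min(1, η_{λ₀}) = 1, and for η_{λ₀} = 0, min(1, η_{λ₀}^{−1}) = 1 and min(1, η_{λ₀}) = 0) is a solution of the coupling problem with data {η_{λ₀}}. -/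
open Complex Filter Topology

/-- An entire function of exponential type zero. -/
def ExpTypeZero (F : ℂ → ℂ) : Prop :=
  Differentiable ℂ F ∧
    ∀ ε : ℝ, 0 < ε → ∃ C : ℝ, 0 < C ∧
      ∀ z : ℂ, ‖F z‖ ≤ C * Real.exp (ε * ‖z‖)

/-- The entire function `W(z) = ∏_{λ ∈ σ} (1 - z/λ)`. -/
noncomputable def CPWronskian (σ : Set ℝ) (z : ℂ) : ℂ :=
  ∏' l : σ, (1 - z / ((l : ℝ) : ℂ))

/-- A solution of the coupling problem with data `η` (coupling constants in
`ℝ ∪ {∞}`, modeled by `Option ℝ` where `none` stands for `∞`). -/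
def IsCouplingSolution (σ : Set ℝ) (η : ℝ → Option ℝ) (Φm Φp : ℂ → ℂ) : Prop :=
  ExpTypeZero Φm ∧ ExpTypeZero Φp ∧
  (∀ l ∈ σ, ∀ c : ℝ, η l = some c → Φp ((l : ℝ) : ℂ) = (c : ℂ) * Φm ((l : ℝ) : ℂ)) ∧
  (∀ l ∈ σ, η l = none → Φm ((l : ℝ) : ℂ) = 0) ∧
  (∀ z : ℂ, 0 < z.im → 0 ≤ (z * Φm z * Φp z / CPWronskian σ z).im) ∧
  Φm 0 = 1 ∧ Φp 0 = 1

/-- `min(1, η⁻¹)`, with the conventions `min(1, ∞⁻¹) = 0` and `min(1, 0⁻¹) = 1`. -/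
noncomputable def minOneInv : Option ℝ → ℝ
  | none => 0
  | some c => if c = 0 then 1 else min 1 c⁻¹

/-- `min(1, η)`, with the convention `min(1, ∞) = 1`. -/
noncomputable def minOne : Option ℝ → ℝ
  | none => 1
  | some c => min 1 c

lemma key (lam t : ℝ) (hlam : lam ≠ 0) (ht0 : 0 ≤ t) (ht1 : t ≤ 1) (z : ℂ) (hz : 0 < z.im) :
    0 ≤ (z * (1 - z * (t:ℝ) / (lam:ℂ)) / (1 - z / (lam:ℂ))).im := by
  have hlamC : (lam:ℂ) ≠ 0 := Complex.ofReal_ne_zero.mpr hlam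
  have hw : (1 : ℂ) - z / lam ≠ 0 := by
    intro h
    have h' : z / (lam:ℂ) = 1 := (sub_eq_zero.mp h).symm
    have hzl : z = (lam:ℂ) := (div_eq_one_iff_eq hlamC).mp h'
    rw [hzl] at hz
    simp at hz
  have hE : z * (1 - z * (t:ℝ) / (lam:ℂ)) / (1 - z / (lam:ℂ))
      = ((t:ℂ) * z - lam + lam * t) + ((lam:ℂ) - lam * t) / (1 - z / (lam:ℂ)) := by
    have hnum : z * (1 - z * (t:ℝ) / (lam:ℂ))
        = ((t:ℂ) * z - lam + lam * t) * (1 - z / (lam:ℂ)) + ((lam:ℂ) - lam * t) := by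
      field_simp [hlamC]
      ring
    rw [hnum, add_div, mul_div_cancel_right₀ _ hw]
  rw [hE]
  have him : ((1:ℂ) - z / lam).im = -(z.im / lam) := by
    simp [Complex.sub_im, Complex.div_ofReal_im]
  have hinv : (((1:ℂ) - z / lam)⁻¹).im = z.im / lam / Complex.normSq (1 - z / (lam:ℂ)) := by
    rw [Complex.inv_im, him]
    ring
  have hns : 0 < Complex.normSq (1 - z / (lam:ℂ)) := Complex.normSq_pos.mpr hw
  rw [Complex.add_im]
  have h1 : (((t:ℂ)) * z - lam + lam * t).im = t * z.im := by
    simp [Complex.sub_im, Complex.add_im, Complex.mul_im]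
  have h2 : (((lam:ℂ) - lam * t) / (1 - z / (lam:ℂ))).im
      = (lam - lam * t) * (z.im / lam / Complex.normSq (1 - z / (lam:ℂ))) := by
    rw [div_eq_mul_inv]
    have h5 : ((lam:ℂ) - lam * t) = ((lam - lam * t : ℝ) : ℂ) := by push_cast; ring
    rw [h5]
    simp [Complex.mul_im, hinv]
  rw [h1, h2]
  have hq : (lam - lam * t) / lam = 1 - t := by
    field_simp
  have h3 : (lam - lam * t) * (z.im / lam / Complex.normSq (1 - z / (lam:ℂ)))
      = (1 - t) * z.im / Complex.normSq (1 - z / (lam:ℂ)) := by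
    calc (lam - lam * t) * (z.im / lam / Complex.normSq (1 - z / (lam:ℂ)))
        = ((lam - lam * t) / lam) * z.im / Complex.normSq (1 - z / (lam:ℂ)) := by ring
      _ = (1 - t) * z.im / Complex.normSq (1 - z / (lam:ℂ)) := by rw [hq]
  rw [h3]
  have h4 : 0 ≤ (1 - t) * z.im / Complex.normSq (1 - z / (lam:ℂ)) :=
    div_nonneg (mul_nonneg (by linarith) hz.le) hns.le
  have h6 : 0 ≤ t * z.im := mul_nonneg ht0 hz.le
  linarith

lemma expZero (a b : ℂ) : ExpTypeZero (fun z => 1 - z * a / b) := by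
  constructor
  · fun_prop
  · intro ε hε
    refine ⟨1 + ‖a / b‖ / ε, by positivity, fun z => ?_⟩
    have h1 : ‖1 - z * a / b‖ ≤ 1 + ‖z‖ * ‖a / b‖ := by
      calc ‖1 - z * a / b‖ ≤ ‖(1:ℂ)‖ + ‖z * a / b‖ := by
            simpa [sub_eq_add_neg] using norm_add_le (1:ℂ) (-(z * a / b))
        _ = 1 + ‖z‖ * ‖a / b‖ := by
            rw [mul_div_assoc, norm_mul]; simp
    have h2 : (1:ℝ) ≤ Real.exp (ε * ‖z‖) := by
      apply Real.one_le_exp; positivity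
    have h3 : ε * ‖z‖ ≤ Real.exp (ε * ‖z‖) := by
      linarith [Real.add_one_le_exp (ε * ‖z‖)]
    have h4 : ‖z‖ * ‖a / b‖
        ≤ (‖a / b‖ / ε) * Real.exp (ε * ‖z‖) := by
      have he : ‖z‖ * ‖a / b‖
          = (‖a / b‖ / ε) * (ε * ‖z‖) := by
        rw [div_mul_eq_mul_div, mul_comm ε, ← mul_assoc, mul_div_assoc,
          div_self hε.ne', mul_one, mul_comm]
      rw [he]
      have := mul_le_mul_of_nonneg_left h3
        (by positivity : (0:ℝ) ≤ ‖a / b‖ / ε)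
      linarith
    calc ‖1 - z * a / b‖ ≤ 1 + ‖z‖ * ‖a / b‖ := h1
      _ ≤ Real.exp (ε * ‖z‖)
          + (‖a / b‖ / ε) * Real.exp (ε * ‖z‖) := by linarith
      _ = (1 + ‖a / b‖ / ε) * Real.exp (ε * ‖z‖) := by ring

lemma wron (lam0 : ℝ) (z : ℂ) : CPWronskian {lam0} z = 1 - z / (lam0:ℂ) := by
  unfold CPWronskian
  rw [tprod_eq_prod (s := Finset.univ) (by intro x hx; exact absurd (Finset.mem_univ x) hx)]
  simp

/-- the explicit pair solves the one-point coupling problem whenever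
the coupling constant is not negative. -/
theorem stmt0 (lam0 : ℝ) (hlam0 : lam0 ≠ 0) (η0 : Option ℝ)
    (hη0 : ∀ c : ℝ, η0 = some c → 0 ≤ c) :
    IsCouplingSolution {lam0} (fun _ => η0)
      (fun z => 1 - z * ((1 - minOneInv η0 : ℝ) : ℂ) / (lam0 : ℂ))
      (fun z => 1 - z * ((1 - minOne η0 : ℝ) : ℂ) / (lam0 : ℂ)) := by
  have hlamC : (lam0:ℂ) ≠ 0 := Complex.ofReal_ne_zero.mpr hlam0
  have heval : ∀ a : ℝ, (1 : ℂ) - (lam0:ℂ) * ((1 - a : ℝ) : ℂ) / (lam0:ℂ) = ((a:ℝ):ℂ) := by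
    intro a
    field_simp
    push_cast
    ring
  refine ⟨expZero _ _, expZero _ _, ?_, ?_, ?_, by simp, by simp⟩
  · -- coupling
    intro l hl c hc
    simp only [Set.mem_singleton_iff] at hl
    subst hl
    dsimp only
    rw [heval, heval]
    rw [← Complex.ofReal_mul, Complex.ofReal_inj]
    subst hc
    have hc0 := hη0 c rfl
    by_cases h0 : c = 0
    · subst h0; simp [minOne, minOneInv]
    · simp only [minOne, minOneInv, if_neg h0]
      rcases le_total c 1 with h1 | h1
      · have hc' : 0 < c := lt_of_le_of_ne hc0 (Ne.symm h0)
        rw [min_eq_right h1, min_eq_left (by rw [le_inv_comm₀ one_pos hc']; simpa using h1)]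
        ring
      · rw [min_eq_left h1, min_eq_right (by rw [inv_le_one_iff₀]; right; exact h1)]
        field_simp
  · -- infinity
    intro l hl hn
    simp only [Set.mem_singleton_iff] at hl
    subst hl
    dsimp only
    rw [heval]
    subst hn
    simp [minOneInv]
  · -- positivity
    intro z hz
    simp only
    rw [wron]
    rcases η0 with _ | c
    · -- η = ∞ : coefficients (1, 0)
      have h := key lam0 1 hlam0 zero_le_one le_rfl z hz
      have he : z * (1 - z * ((1 - minOneInv none : ℝ):ℂ) / (lam0:ℂ))
            * (1 - z * ((1 - minOne none : ℝ):ℂ) / (lam0:ℂ)) / (1 - z/(lam0:ℂ))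
          = z * (1 - z * ((1:ℝ):ℂ) / (lam0:ℂ)) / (1 - z/(lam0:ℂ)) := by
        simp [minOneInv, minOne]
      rw [he]; exact h
    · have hc0 := hη0 c rfl
      by_cases h0 : c = 0
      · subst h0
        have h := key lam0 1 hlam0 zero_le_one le_rfl z hz
        have he : z * (1 - z * ((1 - minOneInv (some 0) : ℝ):ℂ) / (lam0:ℂ))
              * (1 - z * ((1 - minOne (some 0) : ℝ):ℂ) / (lam0:ℂ)) / (1 - z/(lam0:ℂ))
            = z * (1 - z * ((1:ℝ):ℂ) / (lam0:ℂ)) / (1 - z/(lam0:ℂ)) := by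
          simp [minOneInv, minOne]
        rw [he]; exact h
      · have hc' : 0 < c := lt_of_le_of_ne hc0 (Ne.symm h0)
        rcases le_total c 1 with h1 | h1
        · -- minOneInv = 1, minOne = c
          have hmi : minOneInv (some c) = 1 := by
            simp only [minOneInv, if_neg h0]
            exact min_eq_left (by rw [le_inv_comm₀ one_pos hc']; simpa using h1)
          have hm : minOne (some c) = c := by
            simp only [minOne]; exact min_eq_right h1
          have h := key lam0 (1 - c) hlam0 (by linarith) (by linarith) z hz
          have he : z * (1 - z * ((1 - minOneInv (some c) : ℝ):ℂ) / (lam0:ℂ))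
                * (1 - z * ((1 - minOne (some c) : ℝ):ℂ) / (lam0:ℂ)) / (1 - z/(lam0:ℂ))
              = z * (1 - z * ((1 - c : ℝ):ℂ) / (lam0:ℂ)) / (1 - z/(lam0:ℂ)) := by
            rw [hmi, hm]
            push_cast
            ring
          rw [he]; exact h
        · -- minOneInv = c⁻¹, minOne = 1
          have hmi : minOneInv (some c) = c⁻¹ := by
            simp only [minOneInv, if_neg h0]
            exact min_eq_right (by rw [inv_le_one_iff₀]; right; exact h1)
          have hm : minOne (some c) = 1 := by
            simp only [minOne]; exact min_eq_left h1
          have h := key lam0 (1 - c⁻¹) hlam0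
            (by simp only [sub_nonneg]; rw [inv_le_one_iff₀]; right; exact h1)
            (by have h2 : (0:ℝ) ≤ c⁻¹ := inv_nonneg.mpr hc0; linarith) z hz
          have he : z * (1 - z * ((1 - minOneInv (some c) : ℝ):ℂ) / (lam0:ℂ))
                * (1 - z * ((1 - minOne (some c) : ℝ):ℂ) / (lam0:ℂ)) / (1 - z/(lam0:ℂ))
              = z * (1 - z * ((1 - c⁻¹ : ℝ):ℂ) / (lam0:ℂ)) / (1 - z/(lam0:ℂ)) := by
            rw [hmi, hm]
            push_cast
            ring
          rw [he]; exact h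
end

section
/- Let (Φ₋, Φ₊) be a solution of the coupling problem with data {η_λ}_{λ∈σ}. Then for every λ ∈ σ with η_λ ≠ ∞ one has λ·Φ₋(λ)²·η_λ / W'(λ) ≤ 0, where W'(λ) denotes the derivative of W at λ (which is nonzero since each λ ∈ σ is a simple zero of W). -/
open Complex Filter Topology

private lemma summable_inv_abs_subset {σ τ : Set ℝ} (hτ : τ ⊆ σ)
    (h : Summable fun l : σ => 1 / |(l : ℝ)|) :
    Summable fun l : τ => 1 / |(l : ℝ)| := by
  have h1 : Summable ((fun x : ℝ => 1 / |x|) ∘ ((↑) : σ → ℝ)) := h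
  rw [summable_subtype_iff_indicator] at h1
  have h2 : Summable (τ.indicator fun x : ℝ => 1 / |x|) :=
    Summable.of_nonneg_of_le
      (fun x => Set.indicator_nonneg (fun y _ => by positivity) x)
      (fun x => Set.indicator_le_indicator_of_subset hτ (fun y => by positivity) x)
      h1
  have h3 : Summable ((fun x : ℝ => 1 / |x|) ∘ ((↑) : τ → ℝ)) := by
    rwa [summable_subtype_iff_indicator]
  exact h3

open scoped ComplexOrder in
/-- the sign condition on the finite coupling constants forced by
the positivity condition (G); the inequality is with respect to the complex
order, so it in particular asserts that the quantity is real. -/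
theorem stmt5 (σ : Set ℝ)
    (hσ0 : 0 ∉ σ) (hσsum : Summable fun l : σ => 1 / |(l : ℝ)|)
    (η : ℝ → Option ℝ) (Φm Φp : ℂ → ℂ)
    (hsol : IsCouplingSolution σ η Φm Φp) :
    ∀ l ∈ σ, ∀ c : ℝ, η l = some c →
      ((l : ℝ) : ℂ) * Φm ((l : ℝ) : ℂ) ^ 2 * (c : ℂ) / deriv (CPWronskian σ) ((l : ℝ) : ℂ)
        ≤ 0 := by
  obtain ⟨⟨hΦmD, -⟩, ⟨hΦpD, -⟩, hcoup, -, hpos, -, -⟩ := hsol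
  intro l hl c hc
  set lc : ℂ := ((l : ℝ) : ℂ) with hlcdef
  have hl0 : l ≠ 0 := fun h => hσ0 (h ▸ hl)
  have hlc0 : lc ≠ 0 := Complex.ofReal_ne_zero.mpr hl0
  set R : ℝ := |l| + 1 with hRdef
  have hRpos : 0 < R := by positivity
  have hlR : ‖lc‖ < R := by
    rw [hlcdef, Complex.norm_real, Real.norm_eq_abs, hRdef]; linarith
  set σ' : Set ℝ := σ \ {l} with hσ'def
  have hσ'σ : σ' ⊆ σ := Set.diff_subset
  set A : Set ℝ := {x | x ∈ σ' ∧ |x| ≤ 2 * R} with hAdef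
  set B : Set ℝ := {x | x ∈ σ' ∧ 2 * R < |x|} with hBdef
  have hAσ' : A ⊆ σ' := fun x hx => hx.1
  have hBσ' : B ⊆ σ' := fun x hx => hx.1
  have hABun : A ∪ B = σ' := by
    ext x
    exact ⟨fun h => h.elim And.left And.left,
      fun h => (le_or_gt |x| (2 * R)).elim (fun h2 => Or.inl ⟨h, h2⟩)
        (fun h2 => Or.inr ⟨h, h2⟩)⟩
  have hABdisj : Disjoint A B := by
    rw [Set.disjoint_left]
    rintro x ⟨-, h1⟩ ⟨-, h2⟩
    linarith
  -- A is finite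
  have hAfin : A.Finite := by
    have hev : ∀ᶠ x : σ in Filter.cofinite, 1 / |(x : ℝ)| < 1 / (2 * R) :=
      hσsum.tendsto_cofinite_zero.eventually (gt_mem_nhds (by positivity))
    have hSfin : {x : σ | ¬ 1 / |(x : ℝ)| < 1 / (2 * R)}.Finite :=
      Filter.eventually_cofinite.mp hev
    refine Set.Finite.subset (hSfin.image ((↑) : σ → ℝ)) ?_
    rintro x ⟨hx, hx2⟩
    have hx0 : x ≠ 0 := fun h => hσ0 (h ▸ hσ'σ hx)
    refine ⟨⟨x, hσ'σ hx⟩, ?_, rfl⟩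
    simp only [Set.mem_setOf_eq, not_lt]
    exact one_div_le_one_div_of_le (abs_pos.mpr hx0) hx2
  -- basic bounds on B
  have hBbd : ∀ z : ℂ, ‖z‖ ≤ R → ∀ x : ℝ, x ∈ B →
      ‖z / (x : ℂ)‖ ≤ 1 / 2 := by
    intro z hz x hx
    have h2R : (0 : ℝ) < 2 * R := by positivity
    have hxB : 2 * R < |x| := hx.2
    rw [norm_div, Complex.norm_real, Real.norm_eq_abs]
    calc ‖z‖ / |x| ≤ R / (2 * R) :=
          div_le_div₀ hRpos.le hz h2R hxB.le
      _ = 1 / 2 := by field_simp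
  have hBne : ∀ z : ℂ, ‖z‖ ≤ R → ∀ x : ℝ, x ∈ B →
      (1 : ℂ) - z / (x : ℂ) ≠ 0 := by
    intro z hz x hx h
    have h1 : (1 : ℂ) = z / (x : ℂ) := sub_eq_zero.mp h
    have h2 := hBbd z hz x hx
    rw [← h1, norm_one] at h2
    linarith
  have hBre : ∀ z : ℂ, ‖z‖ ≤ R → ∀ x : ℝ, x ∈ B →
      (1 : ℝ) / 2 ≤ ((1 : ℂ) - z / (x : ℂ)).re := by
    intro z hz x hx
    have h1 : (z / (x : ℂ)).re ≤ 1 / 2 :=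
      le_trans (Complex.re_le_norm _) (hBbd z hz x hx)
    simp only [Complex.sub_re, Complex.one_re]
    linarith
  have hBlog : ∀ z : ℂ, ‖z‖ ≤ R → ∀ x : ℝ, x ∈ B →
      ‖Complex.log (1 - z / (x : ℂ))‖ ≤ 3 / 2 * R * (1 / |x|) := by
    intro z hz x hx
    have h1 : ‖-(z / (x : ℂ))‖ ≤ 1 / 2 := by
      rw [norm_neg]; exact hBbd z hz x hx
    have h2 := Complex.norm_log_one_add_half_le_self h1
    rw [← sub_eq_add_neg] at h2
    refine h2.trans ?_
    rw [norm_neg, norm_div, Complex.norm_real, Real.norm_eq_abs]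
    have hx0 : (0:ℝ) < |x| := lt_trans (by positivity) hx.2
    rw [mul_assoc, mul_one_div]
    gcongr
  -- log-sum over B
  have hBsum : Summable fun x : B => 1 / |(x : ℝ)| :=
    summable_inv_abs_subset (hBσ'.trans hσ'σ) hσsum
  have hlogsum : ∀ z : ℂ, ‖z‖ ≤ R →
      Summable fun x : B => Complex.log (1 - z / ((x : ℝ) : ℂ)) := by
    intro z hz
    refine Summable.of_norm_bounded (g := fun x : B => 3 / 2 * R * (1 / |(x : ℝ)|))
      (hBsum.mul_left _) ?_
    intro x
    exact hBlog z hz (x : ℝ) x.2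
  set L : ℂ → ℂ := fun z => ∑' x : B, Complex.log (1 - z / ((x : ℝ) : ℂ)) with hLdef
  have hLcont : ContinuousOn L (Metric.closedBall (0 : ℂ) R) := by
    have habs : ∀ z : ℂ, z ∈ Metric.closedBall (0 : ℂ) R → ‖z‖ ≤ R := by
      intro z hz
      rwa [Metric.mem_closedBall, dist_zero_right] at hz
    have hunif := tendstoUniformlyOn_tsum (f := fun (x : B) (z : ℂ) =>
        Complex.log (1 - z / ((x : ℝ) : ℂ)))
      (u := fun x : B => 3 / 2 * R * (1 / |(x : ℝ)|)) (hBsum.mul_left _)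
      (s := Metric.closedBall (0 : ℂ) R)
      (fun x z hz => hBlog z (habs z hz) (x : ℝ) x.2)
    refine hunif.continuousOn (Filter.Eventually.of_forall fun t => ?_).frequently
    refine continuousOn_finset_sum t fun x _ => ?_
    refine ContinuousOn.clog ?_ ?_
    · exact (continuous_const.sub (continuous_id.div_const _)).continuousOn
    · intro z hz
      rw [Complex.mem_slitPlane_iff]
      left
      have := hBre z (habs z hz) (x : ℝ) x.2
      linarith
  have hBprod : ∀ z : ℂ, ‖z‖ ≤ R →
      HasProd (fun x : B => 1 - z / ((x : ℝ) : ℂ)) (Complex.exp (L z)) := by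
    intro z hz
    refine ((hlogsum z hz).hasSum.cexp).congr ?_
    intro s
    congr
    exact funext fun x => Complex.exp_log (hBne z hz (x : ℝ) x.2)
  have hBeq : ∀ z : ℂ, ‖z‖ ≤ R →
      CPWronskian B z = Complex.exp (L z) := fun z hz => (hBprod z hz).tprod_eq
  -- the finite part A
  haveI : Fintype A := hAfin.fintype
  have hAeq : ∀ z : ℂ, CPWronskian A z = ∏ x : A, (1 - z / ((x : ℝ) : ℂ)) :=
    fun z => tprod_fintype _
  have hAcont : Continuous fun z : ℂ => CPWronskian A z := by
    simp only [hAeq]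
    exact continuous_finset_prod _ fun x _ =>
      continuous_const.sub (continuous_id.div_const _)
  have hfacne : ∀ x : ℝ, x ∈ σ' → (1 : ℂ) - lc / (x : ℂ) ≠ 0 := by
    intro x hx h
    have hx0 : x ≠ 0 := fun h0 => hσ0 (h0 ▸ hσ'σ hx)
    have hx0' : ((x : ℝ) : ℂ) ≠ 0 := Complex.ofReal_ne_zero.mpr hx0
    have h1 : lc / (x : ℂ) = 1 := by
      have := sub_eq_zero.mp h; exact this.symm
    have h2 : lc = (x : ℂ) := by
      field_simp at h1; exact h1
    have : l = x := Complex.ofReal_injective h2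
    exact hx.2 (by simp [this])
  have hA0 : CPWronskian A lc ≠ 0 := by
    rw [hAeq]
    refine Finset.prod_ne_zero_iff.mpr fun x _ => ?_
    exact hfacne (x : ℝ) (hAσ' x.2)
  have hmultA : ∀ z : ℂ,
      Multipliable ((fun x : ℝ => 1 - z / (x : ℂ)) ∘ ((↑) : A → ℝ)) :=
    fun z => Multipliable.of_finite
  have hBprod' : ∀ z : ℂ, ‖z‖ ≤ R →
      HasProd ((fun x : ℝ => 1 - z / (x : ℂ)) ∘ ((↑) : B → ℝ)) (Complex.exp (L z)) :=
    fun z hz => hBprod z hz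
  have habsmem : ∀ z : ℂ, z ∈ Metric.closedBall (0 : ℂ) R → ‖z‖ ≤ R := by
    intro z hz
    rwa [Metric.mem_closedBall, dist_zero_right] at hz
  -- splitting the product
  have hVeq : ∀ z : ℂ, ‖z‖ ≤ R →
      CPWronskian σ' z = CPWronskian A z * CPWronskian B z := by
    intro z hz
    have h := Multipliable.tprod_union_disjoint (f := fun x : ℝ => 1 - z / (x : ℂ))
      hABdisj (hmultA z) (hBprod' z hz).multipliable
    rw [hABun] at h
    simpa only [CPWronskian] using h
  have hmultσ' : ∀ z : ℂ, ‖z‖ ≤ R →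
      Multipliable ((fun x : ℝ => 1 - z / (x : ℂ)) ∘ ((↑) : σ' → ℝ)) := by
    intro z hz
    have h := ((hmultA z).hasProd.mul_disjoint hABdisj (hBprod' z hz)).multipliable
    rwa [hABun] at h
  have hσun : {l} ∪ σ' = σ := by
    rw [Set.singleton_union, hσ'def, Set.insert_diff_singleton,
      Set.insert_eq_self.mpr hl]
  have hldisj : Disjoint ({l} : Set ℝ) σ' := by
    rw [Set.disjoint_left]
    rintro x rfl hx
    · exact hx.2 rfl
  have hWeq : ∀ z : ℂ, ‖z‖ ≤ R →
      CPWronskian σ z = (1 - z / lc) * CPWronskian σ' z := by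
    intro z hz
    haveI := (Set.finite_singleton l).to_subtype
    have hml : Multipliable ((fun x : ℝ => 1 - z / (x : ℂ)) ∘ ((↑) : ({l} : Set ℝ) → ℝ)) :=
      Multipliable.of_finite
    have h := Multipliable.tprod_union_disjoint (f := fun x : ℝ => 1 - z / (x : ℂ))
      hldisj hml (hmultσ' z hz)
    rw [hσun] at h
    rw [tprod_singleton l (fun x : ℝ => 1 - z / (x : ℂ))] at h
    simpa only [CPWronskian] using h
  -- continuity of the reduced product at lc
  have hball : Metric.ball (0 : ℂ) R ∈ 𝓝 lc :=
    Metric.isOpen_ball.mem_nhds (by rwa [Metric.mem_ball, dist_zero_right])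
  have hcball : Metric.closedBall (0 : ℂ) R ∈ 𝓝 lc :=
    Filter.mem_of_superset hball Metric.ball_subset_closedBall
  have hlcmem : ‖lc‖ ≤ R := hlR.le
  have hVcont : ContinuousAt (CPWronskian σ') lc := by
    have h1 : ContinuousAt (fun z => CPWronskian A z * Complex.exp (L z)) lc := by
      refine ContinuousAt.mul hAcont.continuousAt ?_
      exact Complex.continuous_exp.continuousAt.comp (hLcont.continuousAt hcball)
    refine h1.congr ?_
    refine Filter.eventuallyEq_of_mem hcball fun z hz => ?_
    rw [hVeq z (habsmem z hz), hBeq z (habsmem z hz)]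
  have hV0 : CPWronskian σ' lc ≠ 0 := by
    rw [hVeq lc hlcmem, hBeq lc hlcmem]
    exact mul_ne_zero hA0 (Complex.exp_ne_zero _)
  have hW0 : CPWronskian σ lc = 0 := by
    rw [hWeq lc hlcmem, div_self hlc0, sub_self, zero_mul]
  -- derivative of W at lc
  have hWderiv : HasDerivAt (CPWronskian σ) (-(CPWronskian σ' lc) / lc) lc := by
    rw [hasDerivAt_iff_tendsto_slope]
    have hev : (fun z => -(CPWronskian σ' z) / lc) =ᶠ[𝓝[≠] lc] slope (CPWronskian σ) lc := by
      filter_upwards [self_mem_nhdsWithin, nhdsWithin_le_nhds hcball] with z hz hzball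
      have hzne : z ≠ lc := hz
      rw [slope_def_field, hW0, hWeq z (habsmem z hzball)]
      field_simp [sub_ne_zero.mpr hzne]
      ring
    have hT : Filter.Tendsto (fun z => -(CPWronskian σ' z) / lc) (𝓝[≠] lc)
        (𝓝 (-(CPWronskian σ' lc) / lc)) :=
      Filter.Tendsto.mono_left ((hVcont.neg).tendsto.div_const lc) nhdsWithin_le_nhds
    exact Filter.Tendsto.congr' hev hT
  have hderiv : deriv (CPWronskian σ) lc = -(CPWronskian σ' lc) / lc := hWderiv.deriv
  -- the key quantity K and the Herglotz-residue sign argument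
  set K : ℂ := -lc * lc * Φm lc * Φp lc / CPWronskian σ' lc with hKdef
  have hKw : ∀ w : ℂ, 0 < w.im → 0 ≤ (K / w).im := by
    intro w hw
    have hw0 : w ≠ 0 := fun h => by simp [h] at hw
    have hφ : Filter.Tendsto (fun t : ℝ => lc + (t : ℂ) * w) (𝓝[>] (0 : ℝ)) (𝓝 lc) := by
      have hco : Continuous fun t : ℝ => lc + (t : ℂ) * w :=
        continuous_const.add (Complex.continuous_ofReal.mul continuous_const)
      have h0 : Filter.Tendsto (fun t : ℝ => lc + (t : ℂ) * w) (𝓝[>] (0:ℝ))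
          (𝓝 (lc + ((0:ℝ):ℂ) * w)) :=
        (hco.tendsto 0).mono_left nhdsWithin_le_nhds
      simpa using h0
    have hF : ContinuousAt (fun z : ℂ =>
        ((-lc * z * Φm z * Φp z / CPWronskian σ' z) / w).im) lc := by
      refine Complex.continuous_im.continuousAt.comp ?_
      refine ContinuousAt.div_const ?_ w
      refine ContinuousAt.div ?_ hVcont hV0
      exact ((continuousAt_const.mul continuousAt_id).mul
        hΦmD.continuous.continuousAt).mul hΦpD.continuous.continuousAt
    have h1 : Filter.Tendsto (fun t : ℝ =>
        ((-lc * (lc + (t:ℂ)*w) * Φm (lc + (t:ℂ)*w) * Φp (lc + (t:ℂ)*w) /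
          CPWronskian σ' (lc + (t:ℂ)*w)) / w).im) (𝓝[>] (0:ℝ)) (𝓝 ((K / w).im)) :=
      hF.tendsto.comp hφ
    refine ge_of_tendsto h1 ?_
    have hVev : ∀ᶠ t : ℝ in 𝓝[>] 0, CPWronskian σ' (lc + (t:ℂ)*w) ≠ 0 :=
      hφ.eventually (hVcont.eventually_ne hV0)
    have hcbev : ∀ᶠ t : ℝ in 𝓝[>] 0, (lc + (t:ℂ)*w) ∈ Metric.closedBall (0:ℂ) R :=
      hφ.eventually hcball
    filter_upwards [self_mem_nhdsWithin, hVev, hcbev] with t ht hVt hcbt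
    have ht0 : (0:ℝ) < t := ht
    have hzim : 0 < (lc + (t:ℂ)*w).im := by
      simp only [Complex.add_im, Complex.mul_im, Complex.ofReal_im, Complex.ofReal_re,
        hlcdef, zero_mul, add_zero, zero_add]
      exact mul_pos ht0 hw
    have hyp := hpos (lc + (t:ℂ)*w) hzim
    have habsz : ‖lc + (t:ℂ)*w‖ ≤ R := habsmem _ hcbt
    have htne : ((t:ℝ):ℂ) ≠ 0 := Complex.ofReal_ne_zero.mpr ht0.ne'
    have key : (lc + (t:ℂ)*w) * Φm (lc + (t:ℂ)*w) * Φp (lc + (t:ℂ)*w) /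
          CPWronskian σ (lc + (t:ℂ)*w)
        = ((t⁻¹ : ℝ) : ℂ) * ((-lc * (lc + (t:ℂ)*w) * Φm (lc + (t:ℂ)*w) *
            Φp (lc + (t:ℂ)*w) / CPWronskian σ' (lc + (t:ℂ)*w)) / w) := by
      rw [hWeq _ habsz]
      have hfac : (1 : ℂ) - (lc + (t:ℂ)*w) / lc = -((t:ℂ) * w) / lc := by
        field_simp
        ring
      rw [hfac, Complex.ofReal_inv]
      field_simp
    rw [key, Complex.im_ofReal_mul] at hyp
    have h2 := mul_nonneg ht0.le hyp
    rwa [← mul_assoc, mul_inv_cancel₀ ht0.ne', one_mul] at h2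
  -- K is real and nonpositive
  have hKre : K.re ≤ 0 := by
    have h := hKw Complex.I (by simp)
    rw [Complex.div_I] at h
    simp only [Complex.neg_im, Complex.mul_im, Complex.I_re, Complex.I_im,
      mul_zero, mul_one, zero_add, add_zero] at h
    linarith
  have hKim : K.im = 0 := by
    by_contra h
    have hgen : ∀ s : ℝ, 0 ≤ K.im * s - K.re := by
      intro s
      have hws : (0:ℝ) < ((s:ℂ) + Complex.I).im := by simp
      have h2 := hKw ((s:ℂ) + Complex.I) hws
      have hnq : Complex.normSq ((s:ℂ) + Complex.I) = s^2 + 1 := by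
        simp [Complex.normSq_apply]; ring
      rw [Complex.div_im, hnq] at h2
      simp only [Complex.add_re, Complex.add_im, Complex.ofReal_re, Complex.ofReal_im,
        Complex.I_re, Complex.I_im, add_zero, zero_add, mul_one] at h2
      rw [div_sub_div_same] at h2
      have hpos' : (0:ℝ) < s^2 + 1 := by positivity
      have h3 := mul_nonneg h2 hpos'.le
      rwa [div_mul_cancel₀ _ hpos'.ne'] at h3
    have h4 := hgen ((K.re - 1) / K.im)
    have h5 : K.im * ((K.re - 1) / K.im) = K.re - 1 := by field_simp
    rw [h5] at h4
    linarith
  -- conclusion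
  have hΦpc : Φp lc = (c : ℂ) * Φm lc := hcoup l hl c hc
  have hKeq : lc * Φm lc ^ 2 * (c : ℂ) / deriv (CPWronskian σ) lc = K := by
    rw [hderiv, hKdef, hΦpc]
    field_simp [hV0]
  rw [hKeq]
  exact Complex.le_def.mpr ⟨by simpa using hKre, by simpa using hKim⟩
end

section
/- Let σ ⊆ ℝ \ {0} be a discrete set with ∑_{λ∈σ} 1/|λ| < ∞, let ξ_λ ∈ ℝ for each λ ∈ σ, let λ₀ ∈ σ, and let S = {(x,t) ∈ ℝ × (0,∞) : α ≤ x/t ≤ β} be a closed sector (α ≤ β real) such that 1/(2λ) ∉ [α, β] for every λ ∈ σ \ {λ₀}. Then sup over (x,t) ∈ S with t ≥ T of ∑_{λ∈σ\{λ₀}} (1/(2|λ|))·e^{−|x − t/(2λ) + ξ_λ|} tends to 0 as T → ∞; that is, for every ε > 0 there exists T > 0 such that ∑_{λ∈σ\{λ₀}} (1/(2|λ|))·e^{−|x − t/(2λ) + ξ_λ|} < ε for all (x,t) ∈ S with t ≥ T. -/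
open Filter Topology

set_option maxHeartbeats 1000000 in
/-- in a closed sector `α ≤ x/t ≤ β` containing no ray `2λx = t`
for `λ ∈ σ \ {λ₀}`, the sum of the peakon tails over `σ \ {λ₀}` tends to zero
uniformly as `t → ∞`. -/
theorem stmt11 (σ : Set ℝ) (hσ0 : 0 ∉ σ)
    (hσsum : Summable fun l : σ => 1 / |(l : ℝ)|)
    (ξ : ℝ → ℝ) (lam0 : ℝ) (hlam0 : lam0 ∈ σ)
    (α β : ℝ) (hαβ : α ≤ β)
    (hrays : ∀ l ∈ σ, l ≠ lam0 → ¬ (α ≤ 1 / (2 * l) ∧ 1 / (2 * l) ≤ β)) :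
    ∀ ε : ℝ, 0 < ε → ∃ T : ℝ, 0 < T ∧
      ∀ x t : ℝ, 0 < t → α ≤ x / t → x / t ≤ β → T ≤ t →
        (∑' l : ↥(σ \ {lam0}), (1 / (2 * |(l : ℝ)|)) *
          Real.exp (-|x - t / (2 * (l : ℝ)) + ξ (l : ℝ)|)) < ε := by
  intro ε hε
  set s : Set ℝ := σ \ {lam0} with hs
  -- summability of the dominating series on the subtype
  have hinj : Function.Injective (fun l : ↥s => (⟨l.1, l.2.1⟩ : ↥σ)) := by
    intro a b hab
    have h := congrArg Subtype.val hab
    exact Subtype.ext h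
  have hg0 : Summable ((fun l : ↥σ => 1 / |(l : ℝ)|) ∘
      (fun l : ↥s => (⟨l.1, l.2.1⟩ : ↥σ))) := hσsum.comp_injective hinj
  have hg1 : Summable (fun l : ↥s => 1 / |(l : ℝ)|) := hg0.congr fun l => rfl
  have hg : Summable (fun l : ↥s => 1 / (2 * |(l : ℝ)|)) := by
    have h2 := hg1.div_const 2
    refine h2.congr fun l => ?_
    rw [div_div, mul_comm]
  -- the distance of 1/(2l) from the interval [α, β]
  set c : ℝ → ℝ := fun l => 1 / (2 * l) with hc
  set d : ℝ → ℝ := fun l => if c l < α then α - c l else c l - β with hd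
  have hdpos : ∀ l : ↥s, 0 < d l.1 := by
    intro l
    have hl := hrays l.1 l.2.1 l.2.2
    by_cases h : c l.1 < α
    · simp only [hd, if_pos h]; linarith
    · push_neg at h
      have hb : β < c l.1 := by
        by_contra hb; push_neg at hb; exact hl ⟨h, hb⟩
      simp only [hd, if_neg (not_lt.mpr h)]; linarith
  -- nonnegativity and summability of the actual terms
  have hfnonneg : ∀ (x t : ℝ) (l : ↥s),
      0 ≤ (1 / (2 * |(l : ℝ)|)) * Real.exp (-|x - t / (2 * (l : ℝ)) + ξ (l : ℝ)|) := by
    intro x t l; positivity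
  have hfle : ∀ (x t : ℝ) (l : ↥s),
      (1 / (2 * |(l : ℝ)|)) * Real.exp (-|x - t / (2 * (l : ℝ)) + ξ (l : ℝ)|) ≤
      1 / (2 * |(l : ℝ)|) := by
    intro x t l
    have h1 : Real.exp (-|x - t / (2 * (l : ℝ)) + ξ (l : ℝ)|) ≤ 1 :=
      Real.exp_le_one_iff.mpr (neg_nonpos.mpr (abs_nonneg _))
    calc (1 / (2 * |(l : ℝ)|)) * Real.exp (-|x - t / (2 * (l : ℝ)) + ξ (l : ℝ)|)
        ≤ (1 / (2 * |(l : ℝ)|)) * 1 := by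
          apply mul_le_mul_of_nonneg_left h1; positivity
      _ = 1 / (2 * |(l : ℝ)|) := mul_one _
  have hf : ∀ x t : ℝ, Summable (fun l : ↥s =>
      (1 / (2 * |(l : ℝ)|)) * Real.exp (-|x - t / (2 * (l : ℝ)) + ξ (l : ℝ)|)) := by
    intro x t
    exact Summable.of_nonneg_of_le (hfnonneg x t) (hfle x t) hg
  -- key pointwise bound in the sector
  have key : ∀ x t : ℝ, 0 < t → α ≤ x / t → x / t ≤ β → ∀ l : ↥s,
      (1 / (2 * |(l : ℝ)|)) * Real.exp (-|x - t / (2 * (l : ℝ)) + ξ (l : ℝ)|) ≤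
      (1 / (2 * |(l : ℝ)|)) * Real.exp (|ξ (l : ℝ)|) * Real.exp (-(t * d l.1)) := by
    intro x t ht hxα hxβ l
    have hx1 : α * t ≤ x := (le_div_iff₀ ht).mp hxα
    have hx2 : x ≤ β * t := (div_le_iff₀ ht).mp hxβ
    have habs : t * d l.1 ≤ |x - t * c l.1| := by
      by_cases h : c l.1 < α
      · have hd' : d l.1 = α - c l.1 := by simp only [hd, if_pos h]
        have : t * d l.1 ≤ x - t * c l.1 := by rw [hd']; nlinarith
        exact this.trans (le_abs_self _)
      · have hd' : d l.1 = c l.1 - β := by simp only [hd, if_neg h]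
        have : t * d l.1 ≤ -(x - t * c l.1) := by rw [hd']; nlinarith
        exact this.trans (neg_le_abs _)
    have htriangle : |x - t * c l.1| - |ξ (l : ℝ)| ≤ |x - t * c l.1 + ξ (l : ℝ)| := by
      have := abs_sub_abs_le_abs_sub (x - t * c l.1) (-(ξ (l : ℝ)))
      simpa [sub_neg_eq_add] using this
    have hrw : x - t / (2 * (l : ℝ)) + ξ (l : ℝ) = x - t * c l.1 + ξ (l : ℝ) := by
      rw [hc]; ring
    rw [hrw, mul_assoc, ← Real.exp_add]
    apply mul_le_mul_of_nonneg_left _ (by positivity : (0:ℝ) ≤ 1 / (2 * |(l : ℝ)|))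
    apply Real.exp_le_exp.mpr
    linarith
  -- choose a finset controlling the tail
  have htail := tendsto_tsum_compl_atTop_zero (fun l : ↥s => 1 / (2 * |(l : ℝ)|))
  have hev := htail.eventually (gt_mem_nhds (half_pos hε))
  obtain ⟨A, hA⟩ := hev.exists
  -- choose T controlling the finitely many main terms
  set ε' : ℝ := ε / (2 * (A.card + 1)) with hε'def
  have hε' : 0 < ε' := by positivity
  have hlim : ∀ l : ↥s, Tendsto (fun t : ℝ =>
      (1 / (2 * |(l : ℝ)|)) * Real.exp (|ξ (l : ℝ)|) * Real.exp (-(t * d l.1)))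
      atTop (𝓝 0) := by
    intro l
    have h1 : Tendsto (fun t : ℝ => t * d l.1) atTop atTop :=
      Tendsto.atTop_mul_const (hdpos l) tendsto_id
    have h2 : Tendsto (fun t : ℝ => -(t * d l.1)) atTop atBot :=
      tendsto_neg_atBot_iff.mpr h1
    have h3 : Tendsto (fun t : ℝ => Real.exp (-(t * d l.1))) atTop (𝓝 0) :=
      Real.tendsto_exp_atBot.comp h2
    simpa using h3.const_mul ((1 / (2 * |(l : ℝ)|)) * Real.exp (|ξ (l : ℝ)|))
  have hevA : ∀ᶠ t : ℝ in atTop, ∀ l ∈ A,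
      (1 / (2 * |(l : ℝ)|)) * Real.exp (|ξ (l : ℝ)|) * Real.exp (-(t * d l.1)) < ε' := by
    rw [eventually_all_finset]
    intro l _
    exact (hlim l).eventually (gt_mem_nhds hε')
  obtain ⟨T₀, hT₀⟩ := eventually_atTop.mp hevA
  refine ⟨max T₀ 1, lt_of_lt_of_le one_pos (le_max_right _ _), ?_⟩
  intro x t ht hxα hxβ hT
  have hTt : T₀ ≤ t := le_trans (le_max_left _ _) hT
  -- split the sum
  have hsplit := Summable.sum_add_tsum_compl (s := A) (hf x t)
  rw [← hsplit]
  -- bound the finite part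
  have hmain : (∑ l ∈ A, (1 / (2 * |(l : ℝ)|)) *
      Real.exp (-|x - t / (2 * (l : ℝ)) + ξ (l : ℝ)|)) ≤ A.card * ε' := by
    have : ∀ l ∈ A, (1 / (2 * |(l : ℝ)|)) *
        Real.exp (-|x - t / (2 * (l : ℝ)) + ξ (l : ℝ)|) ≤ ε' := fun l hl =>
      (key x t ht hxα hxβ l).trans (le_of_lt (hT₀ t hTt l hl))
    calc (∑ l ∈ A, (1 / (2 * |(l : ℝ)|)) *
        Real.exp (-|x - t / (2 * (l : ℝ)) + ξ (l : ℝ)|))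
        ≤ A.card • ε' := Finset.sum_le_card_nsmul A _ ε' this
      _ = A.card * ε' := nsmul_eq_mul _ _
  -- bound the tail part
  have htailbound : (∑' l : ↑(↑A : Set ↥s)ᶜ,
      (1 / (2 * |((l : ↥s) : ℝ)|)) *
        Real.exp (-|x - t / (2 * ((l : ↥s) : ℝ)) + ξ ((l : ↥s) : ℝ)|)) ≤
      ∑' l : ↑(↑A : Set ↥s)ᶜ, 1 / (2 * |((l : ↥s) : ℝ)|) := by
    apply Summable.tsum_le_tsum
    · intro l; exact hfle x t l
    · exact (hf x t).subtype _
    · exact hg.subtype _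
  have htail2 : (∑' l : ↑(↑A : Set ↥s)ᶜ, 1 / (2 * |((l : ↥s) : ℝ)|)) < ε / 2 := by
    exact hA
  have hcard : (A.card : ℝ) * ε' < ε / 2 := by
    rw [hε'def]
    have h1 : (A.card : ℝ) < A.card + 1 := by linarith
    calc (A.card : ℝ) * (ε / (2 * (A.card + 1)))
        < (A.card + 1) * (ε / (2 * (A.card + 1))) := by
          apply mul_lt_mul_of_pos_right h1; positivity
      _ = ε / 2 := by field_simp
  linarith [htailbound.trans_lt htail2, hmain.trans_lt hcard]
end
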